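/- For every positive integer n, ln( (2n² + 2n + 1)/(2n²) ) = (1/(2n⁴)) · ∑_{k=0}^∞ (1/(−4n⁴)^k) · ( 2n³/(4k+1) − n/(4k+3) + 1/(4k+4) ). -/

import Mathlib

/-!
Put `w = (i - 1) / (2x)`. Then `‖1 - w‖² = (2x² + 2x + 1) / (2x²)` and `w⁴ = -1 / (4x⁴)` is real,
so taking real parts in `-log (1 - w) = ∑ wᵏ / k` and grouping the terms by the residue of `k`
modulo 4 gives a series in powers of `-1 / (4x⁴)`. The real parts of `w, w², w³, w⁴` are
`-1/(2x), 0, 1/(4x³), -1/(4x⁴)`, which yield the coefficients `2x³, 0, -x, 1`.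
-/

open Complex Finset

theorem HasSum.sum_range_mul_add {M : Type*} [AddCommMonoid M] [TopologicalSpace M]
    [ContinuousAdd M] [RegularSpace M] {f : ℕ → M} {a : M} (hf : HasSum f a)
    (l : ℕ) [NeZero l] : HasSum (fun m => ∑ j ∈ range l, f (l * m + j)) a := by
  have hprod : HasSum (fun p : ℕ × Fin l => f (l * p.1 + p.2)) a := by
    simpa [Function.comp_def, mul_comm] using (Nat.divModEquiv l).symm.hasSum_iff.mpr hf
  exact hprod.prod_fiberwise fun m => by
    simpa [Finset.sum_range] using hasSum_fintype fun j : Fin l => f (l * m + j)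

theorem Complex.hasSum_neg_log_norm_one_sub_of_pow_eq {w : ℂ} (hw : ‖w‖ < 1) {l : ℕ}
    [NeZero l] {c : ℝ} (hc : w ^ l = c) :
    HasSum (fun m : ℕ => c ^ m * ∑ j ∈ range l, (w ^ (j + 1)).re / (l * m + j + 1))
      (-Real.log ‖1 - w‖) := by
  have hre : HasSum (fun n : ℕ => (w ^ (n + 1)).re / (n + 1)) (-Real.log ‖1 - w‖) := by
    convert (hasSum_taylorSeries_neg_log' hw).mapL reCLM using 1
    · ext n
      rw [reCLM_apply, ← ofReal_natCast, ← ofReal_one, ← ofReal_add, div_ofReal_re]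
    · rw [reCLM_apply, neg_re, log_re]
  convert hre.sum_range_mul_add l using 2 with m
  rw [mul_sum]
  refine sum_congr rfl fun j _ => ?_
  have hpow : w ^ (l * m + j + 1) = ((c ^ m : ℝ) : ℂ) * w ^ (j + 1) := by
    rw [add_assoc, pow_add, pow_mul, hc, ofReal_pow]
  rw [hpow, re_ofReal_mul]
  push_cast
  ring

theorem Complex.I_sub_one_pow_four : (I - 1) ^ 4 = -4 := by
  linear_combination (I ^ 2 - 4 * I + 5) * I_sq

theorem sum_range_four_re_pow_div {x : ℝ} (hx : x ≠ 0) (m : ℕ) :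
    ∑ j ∈ range 4, (((((2 * x)⁻¹ : ℝ) : ℂ) * (I - 1)) ^ (j + 1)).re / (4 * m + j + 1) =
      -(1 / (4 * x ^ 4)) * (2 * x ^ 3 / (4 * m + 1) - x / (4 * m + 3) + 1 / (4 * m + 4)) := by
  simp only [sum_range_succ, sum_range_zero, mul_pow, ← ofReal_pow, re_ofReal_mul]
  simp only [pow_succ, pow_zero, one_mul, mul_re, mul_im, sub_re, sub_im, I_re, I_im, one_re, one_im]
  field_simp
  ring

theorem Real.log_eq_bbp_tsum_of_one_lt_two_mul_sq {x : ℝ} (hx : 1 < 2 * x ^ 2) :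
    Real.log ((2 * x ^ 2 + 2 * x + 1) / (2 * x ^ 2)) =
      (1 / (2 * x ^ 4)) * ∑' k : ℕ, 1 / (-(4 * x ^ 4)) ^ k *
        (2 * x ^ 3 / (4 * (k : ℝ) + 1) - x / (4 * (k : ℝ) + 3) + 1 / (4 * (k : ℝ) + 4)) := by
  have hx0 : x ≠ 0 := by rintro rfl; norm_num at hx
  set w : ℂ := ((2 * x)⁻¹ : ℝ) * (I - 1) with hw
  have hw_re : w.re = -(2 * x)⁻¹ := by simp [hw]
  have hw_im : w.im = (2 * x)⁻¹ := by simp [hw]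
  have hw_norm : ‖w‖ < 1 := by
    have hsq : ‖w‖ ^ 2 = 1 / (2 * x ^ 2) := by
      rw [Complex.sq_norm, normSq_apply, hw_re, hw_im]
      field_simp
      ring
    refine (sq_lt_one_iff₀ (norm_nonneg w)).mp ?_
    rwa [hsq, div_lt_one (by positivity)]
  have hw_pow : w ^ 4 = ((1 / (-(4 * x ^ 4)) : ℝ) : ℂ) := by
    rw [hw, mul_pow, I_sub_one_pow_four]
    push_cast
    field_simp
    ring
  have hnorm : ‖1 - w‖ ^ 2 = (2 * x ^ 2 + 2 * x + 1) / (2 * x ^ 2) := by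
    rw [Complex.sq_norm, normSq_apply, sub_re, sub_im, one_re, one_im, hw_re, hw_im]
    field_simp
    ring
  have hsum := (hasSum_neg_log_norm_one_sub_of_pow_eq hw_norm hw_pow).tsum_eq
  simp only [hw, Nat.cast_ofNat, sum_range_four_re_pow_div hx0, div_pow, one_pow,
    mul_left_comm _ (-(1 / (4 * x ^ 4))), tsum_mul_left] at hsum
  rw [← hnorm, Real.log_pow]
  push_cast
  linear_combination 2 * hsum

theorem stmt_17 (n : ℕ) (hn : 0 < n) :
    Real.log ((2 * (n : ℝ) ^ 2 + 2 * (n : ℝ) + 1) / (2 * (n : ℝ) ^ 2)) =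
      (1 / (2 * (n : ℝ) ^ 4)) * ∑' k : ℕ, (1 / (-(4 * (n : ℝ) ^ 4)) ^ k) *
        (2 * (n : ℝ) ^ 3 / (4 * (k : ℝ) + 1) - (n : ℝ) / (4 * (k : ℝ) + 3)
          + 1 / (4 * (k : ℝ) + 4)) := by
  have hn1 : (1 : ℝ) ≤ n := by exact_mod_cast hn
  exact Real.log_eq_bbp_tsum_of_one_lt_two_mul_sq (x := n) (by nlinarith)
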